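/- Let ℓ ≥ 5 be a prime and k an integer with 2 ≤ k ≤ ℓ - 1. If ℓ² - 1 = 2 · gcd(ℓ² - 1, (ℓ - 1)(k - 1)), then ℓ = 2k - 3. -/
import Mathlib


/-- Let ℓ ≥ 5 be a prime and k an integer with 2 ≤ k ≤ ℓ - 1.
If ℓ² - 1 = 2 · gcd(ℓ² - 1, (ℓ - 1)(k - 1)), then ℓ = 2k - 3. -/
theorem stmt_1 (ℓ k : ℕ) (hℓ : ℓ.Prime) (hℓ5 : 5 ≤ ℓ) (hk2 : 2 ≤ k) (hkℓ : k ≤ ℓ - 1)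
    (h : ℓ ^ 2 - 1 = 2 * Nat.gcd (ℓ ^ 2 - 1) ((ℓ - 1) * (k - 1))) : ℓ = 2 * k - 3 := by
  obtain ⟨m, rfl⟩ : ∃ m, ℓ = m + 1 := ⟨ℓ - 1, by omega⟩
  have hm4 : 4 ≤ m := by omega
  have hsq : (m + 1) ^ 2 - 1 = m * (m + 2) := by
    have : (m + 1) ^ 2 = m * (m + 2) + 1 := by ring
    omega
  rw [hsq, show m + 1 - 1 = m from rfl, Nat.gcd_mul_left] at h
  have h2 : m * (m + 2) = m * (2 * Nat.gcd (m + 2) (k - 1)) := by rw [h]; ring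
  have h2' : m + 2 = 2 * Nat.gcd (m + 2) (k - 1) :=
    Nat.eq_of_mul_eq_mul_left (show 0 < m by omega) h2
  obtain ⟨d, hd⟩ : Nat.gcd (m + 2) (k - 1) ∣ k - 1 := Nat.gcd_dvd_right _ _
  have h3 : 2 * (k - 1) = (m + 2) * d := by
    conv_rhs => rw [h2']
    conv_lhs => rw [hd]
    ring
  have hd1 : d = 1 := by
    rcases d with _ | _ | d
    · omega
    · rfl
    · exfalso
      have : (m + 2) * 2 ≤ (m + 2) * (d + 1 + 1) := Nat.mul_le_mul_left _ (by omega)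
      omega
  subst hd1
  omega
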